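/- arXiv:1107.5368 — 3 statements merged into one kernel-verified Lean document; each statement's English description precedes it below -/
import Mathlib

section
/- Let (X, μ) be a probability space and T : X → X an invertible measure-preserving transformation. Then for every measurable set A ⊆ X with μ(A) > 0, the lim inf as N → ∞ of (1/N) · Σ_{i=1}^{N} μ(A ∩ T^{-i}A ∩ T^{-2i}A) is strictly positive. -/
open MeasureTheory Filter Finset
open scoped ENNReal

/-!
The ergodic statement is deduced from the finite Roth theorem. Since the return times of `x` to `A`
among `0, …, M - 1` along the orbit of `T^d` number `M μ(A)` on average and at most `M`, on a set of
measure `≥ μ(A)/2` they have density `≥ μ(A)/2`. For `M` large they then contain a three-term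
progression `m, m + j, m + 2j`, i.e. `T^{dm} x ∈ A ∩ T^{-dj} A ∩ T^{-2dj} A` with `j ≤ M`.
A union bound gives `μ A / 2 ≤ M Σ_{j ≤ M} μ(A ∩ T^{-dj}A ∩ T^{-2dj}A)` for every `d`, and
summing over `d ≤ N / M` (each `i ≤ N` is of the form `dj` for at most `M` pairs) bounds the `N`-th
average below by `μ A / (4 M³)`.
-/

lemma cornersTheoremBound_pos (ε : ℝ) : 0 < cornersTheoremBound ε :=
  Nat.succ_pos _

lemma exists_threeAP_of_le_card {ε : ℝ} (hε : 0 < ε) {M : ℕ}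
    (hM : cornersTheoremBound (ε / 3) ≤ M) {E : Finset ℕ} (hE : E ⊆ range M)
    (hcard : ε * M ≤ #E) :
    ∃ m j : ℕ, 0 < j ∧ m ∈ E ∧ m + j ∈ E ∧ m + 2 * j ∈ E := by
  have h := roth_3ap_theorem_nat ε hε hM E hE hcard
  simp only [ThreeAPFree, mem_coe, not_forall] at h
  obtain ⟨a, ha, b, hb, c, hc, habc, hab⟩ := h
  rcases lt_or_gt_of_ne hab with h | h
  · exact ⟨a, b - a, by omega, ha, by rwa [Nat.add_sub_cancel' h.le],
      by convert hc using 1; omega⟩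
  · exact ⟨c, b - c, by omega, hc, by convert hb using 1; omega,
      by convert ha using 1; omega⟩

lemma sum_sum_mul_le_nsmul_sum {R : Type*} [AddCommMonoid R] [PartialOrder R]
    [IsOrderedAddMonoid R] [CanonicallyOrderedAdd R] (P : ℕ → R) {M D N : ℕ} (h : M * D ≤ N) :
    ∑ d ∈ Icc 1 D, ∑ j ∈ Icc 1 M, P (d * j) ≤ M • ∑ i ∈ Icc 1 N, P i := by
  rw [sum_comm]
  calc ∑ j ∈ Icc 1 M, ∑ d ∈ Icc 1 D, P (d * j)
      ≤ ∑ _j ∈ Icc 1 M, ∑ i ∈ Icc 1 N, P i := by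
        refine sum_le_sum fun j hj => ?_
        obtain ⟨hj1, hjM⟩ := mem_Icc.mp hj
        rw [← sum_image fun d _ d' _ h => Nat.eq_of_mul_eq_mul_right hj1 h]
        refine sum_le_sum_of_subset fun i hi => ?_
        obtain ⟨d, hd, rfl⟩ := mem_image.mp hi
        obtain ⟨hd1, hdD⟩ := mem_Icc.mp hd
        exact mem_Icc.mpr ⟨Nat.one_le_iff_ne_zero.mpr (by positivity),
          (Nat.mul_le_mul hdD hjM).trans (by rwa [mul_comm])⟩
    _ = M • ∑ i ∈ Icc 1 N, P i := by simp

lemma lintegral_le_mul_measure_setOf_le_add {X : Type*} [MeasurableSpace X] {μ : Measure X}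
    [IsProbabilityMeasure μ] {g : X → ℝ≥0∞} (hg : Measurable g) {c : ℝ≥0∞} (hgc : ∀ x, g x ≤ c)
    (t : ℝ≥0∞) : ∫⁻ x, g x ∂μ ≤ c * μ {x | t ≤ g x} + t := by
  have hB : MeasurableSet {x | t ≤ g x} := measurableSet_le measurable_const hg
  rw [← lintegral_add_compl g hB]
  gcongr
  · calc ∫⁻ x in {x | t ≤ g x}, g x ∂μ ≤ ∫⁻ _ in {x | t ≤ g x}, c ∂μ := lintegral_mono hgc
      _ = c * μ {x | t ≤ g x} := setLIntegral_const _ _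
  · calc ∫⁻ x in {x | t ≤ g x}ᶜ, g x ∂μ ≤ ∫⁻ _ in {x | t ≤ g x}ᶜ, t ∂μ :=
          setLIntegral_mono measurable_const fun x (hx : ¬t ≤ g x) => (not_le.mp hx).le
      _ = t * μ {x | t ≤ g x}ᶜ := setLIntegral_const _ _
      _ ≤ t := mul_le_of_le_one_right' prob_le_one

section Recurrence

variable {X : Type*} {f : X → X} {A : Set X}

open scoped Classical in
noncomputable def returnTimes (f : X → X) (A : Set X) (M : ℕ) (x : X) : Finset ℕ :=
  (range M).filter fun m => f^[m] x ∈ A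

def apReturnSet (f : X → X) (A : Set X) (i : ℕ) : Set X :=
  A ∩ f^[i] ⁻¹' A ∩ f^[2 * i] ⁻¹' A

lemma returnTimes_subset_range (f : X → X) (A : Set X) (M : ℕ) (x : X) :
    returnTimes f A M x ⊆ range M := by
  classical exact filter_subset _ _

lemma natCast_card_returnTimes (f : X → X) (A : Set X) (M : ℕ) (x : X) :
    (#(returnTimes f A M x) : ℝ≥0∞) = ∑ m ∈ range M, (f^[m] ⁻¹' A).indicator 1 x := by
  classical
  rw [returnTimes, card_filter]
  push_cast
  exact sum_congr rfl fun m _ => by by_cases h : f^[m] x ∈ A <;> simp [h]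

lemma apReturnSet_iterate (f : X → X) (A : Set X) (d j : ℕ) :
    apReturnSet f^[d] A j = apReturnSet f A (d * j) := by
  simp only [apReturnSet, ← Function.iterate_mul, mul_left_comm d 2 j]

lemma exists_iterate_mem_apReturnSet {ε : ℝ≥0∞} (hε₀ : ε ≠ 0) (hε : ε ≠ ∞) {M : ℕ}
    (hM : cornersTheoremBound (ε.toReal / 3) ≤ M) {x : X}
    (hx : M * ε ≤ #(returnTimes f A M x)) :
    ∃ m ∈ range M, ∃ j ∈ Icc 1 M, f^[m] x ∈ apReturnSet f A j := by
  have hcard : ε.toReal * M ≤ #(returnTimes f A M x) := by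
    simpa [mul_comm] using ENNReal.toReal_mono (by simp) hx
  obtain ⟨m, j, hj, hm, hmj, hm2j⟩ := exists_threeAP_of_le_card
    (ENNReal.toReal_pos hε₀ hε) hM (returnTimes_subset_range f A M x) hcard
  have hmem : ∀ {k}, k ∈ returnTimes f A M x → k < M ∧ f^[k] x ∈ A := by
    simp [returnTimes]
  have hm2jM := (hmem hm2j).1
  refine ⟨m, mem_range.mpr (hmem hm).1, j, mem_Icc.mpr ⟨hj, by omega⟩, ⟨(hmem hm).2, ?_⟩, ?_⟩
  · rw [Set.mem_preimage, ← Function.iterate_add_apply, add_comm]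
    exact (hmem hmj).2
  · rw [Set.mem_preimage, ← Function.iterate_add_apply, add_comm]
    exact (hmem hm2j).2

variable [MeasurableSpace X] {μ : Measure X}

lemma measurable_card_returnTimes (hf : Measurable f) (hA : MeasurableSet A) (M : ℕ) :
    Measurable fun x => (#(returnTimes f A M x) : ℝ≥0∞) := by
  simp_rw [natCast_card_returnTimes]
  exact Finset.measurable_sum _ fun m _ => measurable_const.indicator (hA.preimage (hf.iterate m))

lemma lintegral_card_returnTimes (hf : MeasurePreserving f μ μ) (hA : MeasurableSet A) (M : ℕ) :
    ∫⁻ x, (#(returnTimes f A M x) : ℝ≥0∞) ∂μ = M * μ A := by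
  simp_rw [natCast_card_returnTimes]
  rw [lintegral_finsetSum _ fun m _ =>
    measurable_one.indicator (hA.preimage (hf.measurable.iterate m))]
  simp [lintegral_indicator_one (hA.preimage (hf.measurable.iterate _)),
    (hf.iterate _).measure_preimage hA.nullMeasurableSet]

variable [IsProbabilityMeasure μ]

lemma measure_half_le_measure_setOf_card_returnTimes (hf : MeasurePreserving f μ μ)
    (hA : MeasurableSet A) {M : ℕ} (hM : 0 < M) :
    μ A / 2 ≤ μ {x | M * (μ A / 2) ≤ #(returnTimes f A M x)} := by
  have hM₀ : (M : ℝ≥0∞) ≠ 0 := by exact_mod_cast hM.ne'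
  have key := lintegral_le_mul_measure_setOf_le_add (μ := μ)
    (measurable_card_returnTimes hf.measurable hA M)
    (fun x => Nat.cast_le.mpr ((card_le_card (returnTimes_subset_range f A M x)).trans
      (card_range M).le)) (M * (μ A / 2))
  rw [lintegral_card_returnTimes hf hA, ← mul_add,
    ENNReal.mul_le_mul_iff_right hM₀ (ENNReal.natCast_ne_top M), ← tsub_le_iff_right,
    ENNReal.sub_half (measure_ne_top μ A)] at key
  exact key

lemma measure_half_le_mul_sum_measure_apReturnSet (hf : MeasurePreserving f μ μ)
    (hA : MeasurableSet A) (hApos : 0 < μ A) {M : ℕ}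
    (hM : cornersTheoremBound ((μ A / 2).toReal / 3) ≤ M) :
    μ A / 2 ≤ M * ∑ j ∈ Icc 1 M, μ (apReturnSet f A j) := by
  have hM₀ : 0 < M := (cornersTheoremBound_pos _).trans_le hM
  have hε₀ : μ A / 2 ≠ 0 := by simpa using hApos.ne'
  have hε : μ A / 2 ≠ ∞ := ENNReal.div_ne_top (measure_ne_top μ A) two_ne_zero
  have hmeas : ∀ j, MeasurableSet (apReturnSet f A j) := fun j =>
    (hA.inter (hA.preimage (hf.measurable.iterate j))).inter
      (hA.preimage (hf.measurable.iterate _))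
  calc μ A / 2 ≤ μ {x | M * (μ A / 2) ≤ #(returnTimes f A M x)} :=
        measure_half_le_measure_setOf_card_returnTimes hf hA hM₀
    _ ≤ μ (⋃ m ∈ range M, ⋃ j ∈ Icc 1 M, f^[m] ⁻¹' apReturnSet f A j) := by
        refine measure_mono fun x hx => ?_
        obtain ⟨m, hm, j, hj, hx⟩ := exists_iterate_mem_apReturnSet hε₀ hε hM hx
        exact Set.mem_biUnion hm (Set.mem_biUnion hj hx)
    _ ≤ ∑ m ∈ range M, ∑ j ∈ Icc 1 M, μ (f^[m] ⁻¹' apReturnSet f A j) :=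
        (measure_biUnion_finset_le _ _).trans
          (sum_le_sum fun m _ => measure_biUnion_finset_le _ _)
    _ = M * ∑ j ∈ Icc 1 M, μ (apReturnSet f A j) := by
        simp [(hf.iterate _).measure_preimage (hmeas _).nullMeasurableSet]

lemma measure_half_le_mul_average_measure_apReturnSet (hf : MeasurePreserving f μ μ)
    (hA : MeasurableSet A) (hApos : 0 < μ A) {N : ℕ}
    (hN : cornersTheoremBound ((μ A / 2).toReal / 3) ≤ N) :
    μ A / 2 ≤ 2 * cornersTheoremBound ((μ A / 2).toReal / 3) ^ 3 *
      ((N : ℝ≥0∞)⁻¹ * ∑ i ∈ Icc 1 N, μ (apReturnSet f A i)) := by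
  set M := cornersTheoremBound ((μ A / 2).toReal / 3)
  set S := ∑ i ∈ Icc 1 N, μ (apReturnSet f A i)
  have hM₀ : 0 < M := cornersTheoremBound_pos _
  have hN₀ : (N : ℝ≥0∞) ≠ 0 := by exact_mod_cast (hM₀.trans_le hN).ne'
  set D := N / M
  have hMD : M * D ≤ N := Nat.mul_div_le N M
  have hND : N ≤ 2 * M * D := by
    have hdiv : M * D + N % M = N := Nat.div_add_mod N M
    have hmod : N % M < M := Nat.mod_lt N hM₀
    have hMD' : M ≤ M * D := Nat.le_mul_of_pos_right M ((Nat.one_le_div_iff hM₀).mpr hN)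
    rw [mul_assoc]
    omega
  have hDS : (D : ℝ≥0∞) * (μ A / 2) ≤ M * (M * S) := by
    calc (D : ℝ≥0∞) * (μ A / 2) = ∑ _d ∈ Icc 1 D, μ A / 2 := by simp
      _ ≤ ∑ d ∈ Icc 1 D, M * ∑ j ∈ Icc 1 M, μ (apReturnSet f A (d * j)) :=
          sum_le_sum fun d _ => by
            simpa only [apReturnSet_iterate] using
              measure_half_le_mul_sum_measure_apReturnSet (hf.iterate d) hA hApos le_rfl
      _ = M * ∑ d ∈ Icc 1 D, ∑ j ∈ Icc 1 M, μ (apReturnSet f A (d * j)) := by rw [mul_sum]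
      _ ≤ M * (M * S) := by
          gcongr
          simpa using sum_sum_mul_le_nsmul_sum (fun i => μ (apReturnSet f A i)) hMD
  calc μ A / 2 = (N : ℝ≥0∞)⁻¹ * (N * (μ A / 2)) := by
        rw [← mul_assoc, ENNReal.inv_mul_cancel hN₀ (ENNReal.natCast_ne_top N), one_mul]
    _ ≤ (N : ℝ≥0∞)⁻¹ * ((2 * M * D : ℕ) * (μ A / 2)) := by gcongr
    _ = (N : ℝ≥0∞)⁻¹ * (2 * M * (D * (μ A / 2))) := by push_cast; ring
    _ ≤ (N : ℝ≥0∞)⁻¹ * (2 * M * (M * (M * S))) := by gcongr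
    _ = 2 * M ^ 3 * ((N : ℝ≥0∞)⁻¹ * S) := by ring

end Recurrence

/-- **Furstenberg's ergodic form of Roth's theorem.** For an invertible
measure-preserving transformation `T` of a probability space `(X, μ)` and any
measurable set `A` of positive measure, the liminf of the multiple recurrence
averages `(1/N) Σ_{i=1}^N μ(A ∩ T⁻ⁱA ∩ T⁻²ⁱA)` is positive. -/
theorem furstenberg_roth
    {X : Type*} [MeasurableSpace X] (μ : Measure X) [IsProbabilityMeasure μ]
    (T : X ≃ᵐ X) (hT : MeasurePreserving T μ μ)
    (A : Set X) (hA : MeasurableSet A) (hApos : 0 < μ A) :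
    0 < Filter.liminf
      (fun N : ℕ => (N : ℝ≥0∞)⁻¹ *
        ∑ i ∈ Finset.Icc 1 N,
          μ (A ∩ (⇑T)^[i] ⁻¹' A ∩ (⇑T)^[2 * i] ⁻¹' A)) Filter.atTop := by
  set M := cornersTheoremBound ((μ A / 2).toReal / 3)
  have hc : 0 < μ A / 2 / (2 * M ^ 3) :=
    ENNReal.div_pos (by simpa using hApos.ne')
      (ENNReal.mul_ne_top ENNReal.ofNat_ne_top (ENNReal.pow_ne_top (ENNReal.natCast_ne_top M)))
  refine hc.trans_le (le_liminf_of_le (by isBoundedDefault) ?_)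
  filter_upwards [eventually_ge_atTop M] with N hN
  exact ENNReal.div_le_of_le_mul'
    (measure_half_le_mul_average_measure_apReturnSet hT hA hApos hN)
end

section
/- Let (X, μ) be a probability space and T : X → X an invertible measure-preserving transformation that is weakly mixing. Then the transformation S : X × X → X × X defined by S(x, y) = (T x, T² y) is ergodic with respect to the product measure μ ⊗ μ. -/
/-!
For sets `A, C` let `a n = μ (T⁻ⁿ A ∩ C)`. The mean ergodic theorem, applied to the ergodic maps
`T` and `T × T`, gives Cesàro convergence of `a n` to `μ A μ C` and of `a n ^ 2` to `(μ A μ C) ^ 2`,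
so `(a n - μ A μ C) ^ 2` tends to `0` in Cesàro mean. This kind of convergence survives restriction
to the even times `2 n` and products with bounded sequences, hence the correlations
`μ (T⁻ⁿ A ∩ C) μ (T⁻²ⁿ B ∩ D)` of `T × T²` on rectangles converge in Cesàro mean to the product of
the measures. By the mean ergodic theorem again, the projection of the indicator of a rectangle onto
the `T × T²`-invariant part of `L²` is then constant; since rectangles generate the product
σ-algebra, every invariant indicator is constant.
-/

open MeasureTheory Filter Finset
open scoped Topology RealInnerProductSpace

noncomputable def cesaroMean (N : ℕ) : (ℕ → ℝ) →ₗ[ℝ] ℝ :=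
  (N : ℝ)⁻¹ • ∑ n ∈ range N, LinearMap.proj n

theorem cesaroMean_apply (N : ℕ) (u : ℕ → ℝ) :
    cesaroMean N u = (N : ℝ)⁻¹ * ∑ n ∈ range N, u n := by
  simp [cesaroMean]

theorem cesaroMean_nonneg {u : ℕ → ℝ} (hu : ∀ n, 0 ≤ u n) (N : ℕ) : 0 ≤ cesaroMean N u := by
  rw [cesaroMean_apply]
  exact mul_nonneg (by positivity) (sum_nonneg fun n _ => hu n)

theorem cesaroMean_const {N : ℕ} (hN : N ≠ 0) (c : ℝ) : cesaroMean N (fun _ => c) = c := by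
  simp [cesaroMean_apply, hN]

theorem tendsto_cesaroMean_const (c : ℝ) :
    Tendsto (fun N => cesaroMean N fun _ => c) atTop (𝓝 c) :=
  tendsto_const_nhds.congr' <|
    (eventually_ne_atTop 0).mono fun _ hN => (cesaroMean_const hN c).symm

theorem cesaroMean_sq_le_one {y : ℕ → ℝ} (hy : ∀ n, |y n| ≤ 1) (N : ℕ) :
    cesaroMean N (fun n => y n ^ 2) ≤ 1 := by
  rcases eq_or_ne N 0 with rfl | hN
  · simp [cesaroMean_apply]
  calc cesaroMean N (fun n => y n ^ 2) ≤ cesaroMean N (fun _ => 1) := by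
        rw [cesaroMean_apply, cesaroMean_apply]
        gcongr with n
        exact (sq_le_one_iff_abs_le_one _).2 (hy n)
    _ = 1 := cesaroMean_const hN 1

theorem cesaroMean_mul_sq_le (x y : ℕ → ℝ) (N : ℕ) :
    cesaroMean N (fun n => x n * y n) ^ 2 ≤
      cesaroMean N (fun n => x n ^ 2) * cesaroMean N (fun n => y n ^ 2) := by
  simp only [cesaroMean_apply, mul_pow]
  rw [mul_mul_mul_comm, ← sq]
  exact mul_le_mul_of_nonneg_left (sum_mul_sq_le_sq_mul_sq _ _ _) (by positivity)

theorem tendsto_cesaroMean_mul_of_tendsto_sq {x y : ℕ → ℝ}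
    (hx : Tendsto (fun N => cesaroMean N fun n => x n ^ 2) atTop (𝓝 0)) (hy : ∀ n, |y n| ≤ 1) :
    Tendsto (fun N => cesaroMean N fun n => x n * y n) atTop (𝓝 0) := by
  have hsq : Tendsto (fun N => cesaroMean N (fun n => x n * y n) ^ 2) atTop (𝓝 0) :=
    squeeze_zero (fun _ => sq_nonneg _) (fun N => (cesaroMean_mul_sq_le x y N).trans <|
      mul_le_of_le_one_right (cesaroMean_nonneg (fun n => sq_nonneg _) N)
        (cesaroMean_sq_le_one hy N)) hx
  rw [tendsto_zero_iff_abs_tendsto_zero]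
  simpa [Function.comp_def, Real.sqrt_sq_eq_abs] using hsq.sqrt

theorem tendsto_cesaroMean_sq_sub {u : ℕ → ℝ} {L : ℝ}
    (h1 : Tendsto (fun N => cesaroMean N u) atTop (𝓝 L))
    (h2 : Tendsto (fun N => cesaroMean N fun n => u n ^ 2) atTop (𝓝 (L ^ 2))) :
    Tendsto (fun N => cesaroMean N fun n => (u n - L) ^ 2) atTop (𝓝 0) := by
  have hexpand : (fun n => (u n - L) ^ 2) =
      (fun n => u n ^ 2) - (2 * L) • u + L ^ 2 • (fun _ => 1) := by
    ext n; simp only [Pi.add_apply, Pi.sub_apply, Pi.smul_apply, smul_eq_mul]; ring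
  simp only [hexpand, map_add, map_sub, map_smul, smul_eq_mul]
  convert (h2.sub (h1.const_mul (2 * L))).add
    ((tendsto_cesaroMean_const 1).const_mul (L ^ 2)) using 2
  ring

theorem tendsto_cesaroMean_comp_two_mul {u : ℕ → ℝ} (hu : ∀ n, 0 ≤ u n)
    (h : Tendsto (fun N => cesaroMean N u) atTop (𝓝 0)) :
    Tendsto (fun N => cesaroMean N fun n => u (2 * n)) atTop (𝓝 0) := by
  have hbound : ∀ N, cesaroMean N (fun n => u (2 * n)) ≤ 2 * cesaroMean (2 * N) u := by
    intro N
    have hsum : ∑ n ∈ range N, u (2 * n) ≤ ∑ m ∈ range (2 * N), u m := by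
      rw [← sum_image (g := (2 * ·)) fun _ _ _ _ h => by simpa using h]
      exact sum_le_sum_of_subset_of_nonneg (fun m => by simp only [mem_image, mem_range]; omega)
        fun m _ _ => hu m
    rw [cesaroMean_apply, cesaroMean_apply, Nat.cast_mul, Nat.cast_two, mul_inv, ← mul_assoc,
      ← mul_assoc, mul_inv_cancel₀ two_ne_zero, one_mul]
    gcongr
  have h2 : Tendsto (fun N => 2 * cesaroMean (2 * N) u) atTop (𝓝 0) := by
    simpa using (h.comp (tendsto_id.const_mul_atTop' two_pos)).const_mul 2
  exact squeeze_zero (cesaroMean_nonneg fun n => hu _) hbound h2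

theorem tendsto_cesaroMean_mul {a b : ℕ → ℝ} {L M : ℝ}
    (ha : Tendsto (fun N => cesaroMean N fun n => (a n - L) ^ 2) atTop (𝓝 0))
    (hb : Tendsto (fun N => cesaroMean N fun n => (b n - M) ^ 2) atTop (𝓝 0))
    (hb1 : ∀ n, |b n| ≤ 1) :
    Tendsto (fun N => cesaroMean N fun n => a n * b n) atTop (𝓝 (L * M)) := by
  have hsplit : (fun n => a n * b n) =
      (fun n => (a n - L) * b n) + L • (fun n => (b n - M) * 1) + (L * M) • (fun _ => 1) := by
    ext n; simp only [Pi.add_apply, Pi.smul_apply, smul_eq_mul]; ring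
  simp only [hsplit, map_add, map_smul, smul_eq_mul]
  convert ((tendsto_cesaroMean_mul_of_tendsto_sq ha hb1).add
    ((tendsto_cesaroMean_mul_of_tendsto_sq hb (fun _ => abs_one.le)).const_mul L)).add
    ((tendsto_cesaroMean_const 1).const_mul (L * M)) using 2
  ring

theorem MeasureTheory.Integrable.ae_eq_of_setIntegral_eq_of_isPiSystem {Y E : Type*}
    [m : MeasurableSpace Y] {ν : Measure Y} [NormedAddCommGroup E] [NormedSpace ℝ E]
    [CompleteSpace E] {f g : Y → E} (hf : Integrable f ν) (hg : Integrable g ν)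
    {C : Set (Set Y)} (hgen : m = MeasurableSpace.generateFrom C) (hC : IsPiSystem C)
    (hfg : ∀ s ∈ C, ∫ x in s, f x ∂ν = ∫ x in s, g x ∂ν)
    (huniv : ∫ x, f x ∂ν = ∫ x, g x ∂ν) : f =ᵐ[ν] g := by
  refine hf.ae_eq_of_withDensityᵥ_eq hg
    (VectorMeasure.ext_of_generateFrom C (fun s hs => ?_) hgen hC ?_)
  · have hsm : MeasurableSet s := hgen ▸ MeasurableSpace.measurableSet_generateFrom hs
    rw [withDensityᵥ_apply hf hsm, withDensityᵥ_apply hg hsm, hfg s hs]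
  · rw [withDensityᵥ_apply hf .univ, withDensityᵥ_apply hg .univ, setIntegral_univ,
      setIntegral_univ, huniv]

local notation "𝟙[" hs "]" => indicatorConstLp 2 hs (measure_ne_top _ _) (1 : ℝ)

section Koopman

variable {Y : Type*} [MeasurableSpace Y] {ν : Measure Y} {R : Y → Y}

noncomputable def koopman (hR : MeasurePreserving R ν ν) : Lp ℝ 2 ν →L[ℝ] Lp ℝ 2 ν :=
  (Lp.compMeasurePreservingₗᵢ ℝ R hR).toContinuousLinearMap

theorem norm_koopman_le (hR : MeasurePreserving R ν ν) : ‖koopman hR‖ ≤ 1 :=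
  LinearIsometry.norm_toContinuousLinearMap_le _

theorem koopman_apply (hR : MeasurePreserving R ν ν) (f : Lp ℝ 2 ν) :
    koopman hR f = Lp.compMeasurePreserving R hR f := rfl

-- An `abbrev`, so that the `HasOrthogonalProjection` instance of `eqLocus` is found through it.
noncomputable abbrev koopmanFixedSpace (hR : MeasurePreserving R ν ν) : Submodule ℝ (Lp ℝ 2 ν) :=
  (koopman hR).eqLocus (1 : Lp ℝ 2 ν →L[ℝ] Lp ℝ 2 ν)

variable [IsFiniteMeasure ν]

theorem koopman_const (hR : MeasurePreserving R ν ν) (c : ℝ) :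
    koopman hR (Lp.const 2 ν c) = Lp.const 2 ν c := rfl

theorem koopman_iterate_indicatorConstLp (hR : MeasurePreserving R ν ν) {A : Set Y}
    (hA : MeasurableSet A) (n : ℕ) :
    (⇑(koopman hR))^[n] 𝟙[hA] = 𝟙[hA.preimage (hR.iterate n).measurable] := by
  change (Lp.compMeasurePreserving R hR)^[n] _ = _
  rw [Lp.compMeasurePreserving_iterate]
  rfl

theorem inner_const_one_eq_integral (f : Lp ℝ 2 ν) : ⟪Lp.const 2 ν 1, f⟫ = ∫ x, f x ∂ν := by
  rw [← indicatorConstLp_univ, L2.inner_indicatorConstLp_one, setIntegral_univ]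

theorem inner_indicatorConstLp_one_const_one {s : Set Y} (hs : MeasurableSet s) :
    ⟪𝟙[hs], Lp.const 2 ν 1⟫ = ν.real s := by
  rw [← indicatorConstLp_univ, L2.inner_indicatorConstLp_one_indicatorConstLp_one, Set.inter_univ]
  rfl

theorem MeasureTheory.Lp.eq_of_inner_indicatorConstLp_eq_of_isPiSystem {C : Set (Set Y)}
    (hgen : ‹MeasurableSpace Y› = MeasurableSpace.generateFrom C) (hC : IsPiSystem C)
    {f g : Lp ℝ 2 ν} (hfg : ∀ s (hs : MeasurableSet s), s ∈ C → ⟪𝟙[hs], f⟫ = ⟪𝟙[hs], g⟫)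
    (huniv : ⟪Lp.const 2 ν 1, f⟫ = ⟪Lp.const 2 ν 1, g⟫) : f = g := by
  refine Lp.ext (((Lp.memLp f).integrable one_le_two).ae_eq_of_setIntegral_eq_of_isPiSystem
    ((Lp.memLp g).integrable one_le_two) hgen hC (fun s hs => ?_) ?_)
  · have hsm : MeasurableSet s := hgen ▸ MeasurableSpace.measurableSet_generateFrom hs
    simpa only [L2.inner_indicatorConstLp_one] using hfg s hsm hs
  · simpa only [inner_const_one_eq_integral] using huniv

theorem MeasureTheory.MeasurePreserving.tendsto_cesaroMean_measureReal_preimage_inter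
    (hR : MeasurePreserving R ν ν) {A B : Set Y} (hA : MeasurableSet A) (hB : MeasurableSet B) :
    Tendsto (fun N => cesaroMean N fun n => ν.real (R^[n] ⁻¹' A ∩ B)) atTop
      (𝓝 ⟪(koopmanFixedSpace hR).starProjection 𝟙[hA], 𝟙[hB]⟫) := by
  refine (((koopman hR).tendsto_birkhoffAverage_orthogonalProjection (norm_koopman_le hR)
    𝟙[hA]).inner (tendsto_const_nhds (x := 𝟙[hB]))).congr fun N => ?_
  simp only [birkhoffAverage, birkhoffSum, real_inner_smul_left, sum_inner, cesaroMean_apply,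
    id, koopman_iterate_indicatorConstLp, L2.inner_indicatorConstLp_one_indicatorConstLp_one,
    RCLike.ofReal_real_eq_id]

theorem inner_const_one_const_one [IsProbabilityMeasure ν] :
    ⟪Lp.const 2 ν (1 : ℝ), Lp.const 2 ν 1⟫ = 1 := by
  rw [← indicatorConstLp_univ, L2.inner_indicatorConstLp_one_indicatorConstLp_one]
  simp

theorem Ergodic.starProjection_koopmanFixedSpace [IsProbabilityMeasure ν] (hR : Ergodic R ν)
    (f : Lp ℝ 2 ν) :
    (koopmanFixedSpace hR.toMeasurePreserving).starProjection f =
      (∫ x, f x ∂ν) • Lp.const 2 ν 1 := by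
  set K := koopmanFixedSpace hR.toMeasurePreserving
  have hfix : koopman hR.toMeasurePreserving (K.starProjection f) = K.starProjection f :=
    K.starProjection_apply_mem f
  obtain ⟨c, hc⟩ := hR.ae_eq_const_of_ae_eq_comp_ae (Lp.aestronglyMeasurable (K.starProjection f))
    ((Lp.coeFn_compMeasurePreserving _ hR.toMeasurePreserving).symm.trans
      (by rw [← koopman_apply, hfix]))
  have hPf : K.starProjection f = c • Lp.const 2 ν 1 := by
    refine Lp.ext (hc.trans ?_)
    filter_upwards [Lp.coeFn_smul c (Lp.const 2 ν (1 : ℝ))] with x hx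
    simp [hx]
  have hc_eq : c = ∫ x, f x ∂ν :=
    calc c = ⟪Lp.const 2 ν 1, K.starProjection f⟫ := by
          rw [hPf, real_inner_smul_right, inner_const_one_const_one, mul_one]
      _ = ⟪K.starProjection (Lp.const 2 ν 1), f⟫ := (K.inner_starProjection_left_eq_right _ _).symm
      _ = ∫ x, f x ∂ν := by
          rw [K.starProjection_eq_self_iff.2 (koopman_const _ 1), inner_const_one_eq_integral]
  rw [hPf, hc_eq]

theorem Ergodic.tendsto_cesaroMean_measureReal_preimage_inter [IsProbabilityMeasure ν]
    (hR : Ergodic R ν) {A B : Set Y} (hA : MeasurableSet A) (hB : MeasurableSet B) :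
    Tendsto (fun N => cesaroMean N fun n => ν.real (R^[n] ⁻¹' A ∩ B)) atTop
      (𝓝 (ν.real A * ν.real B)) := by
  convert hR.toMeasurePreserving.tendsto_cesaroMean_measureReal_preimage_inter hA hB using 2
  rw [hR.starProjection_koopmanFixedSpace, integral_indicatorConstLp, real_inner_smul_left,
    real_inner_comm, inner_indicatorConstLp_one_const_one, smul_eq_mul, mul_one]

theorem MeasureTheory.MeasurePreserving.ergodic_of_tendsto_cesaroMean [IsProbabilityMeasure ν]
    (hR : MeasurePreserving R ν ν) {C : Set (Set Y)}
    (hgen : ‹MeasurableSpace Y› = MeasurableSpace.generateFrom C) (hC : IsPiSystem C)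
    (hcorr : ∀ A ∈ C, ∀ B ∈ C, Tendsto (fun N => cesaroMean N fun n => ν.real (R^[n] ⁻¹' A ∩ B))
      atTop (𝓝 (ν.real A * ν.real B))) :
    Ergodic R ν := by
  set K := koopmanFixedSpace hR
  have hK1 : K.starProjection (Lp.const 2 ν 1) = Lp.const 2 ν 1 :=
    K.starProjection_eq_self_iff.2 (koopman_const hR 1)
  have hproj : ∀ A (hA : MeasurableSet A), A ∈ C →
      K.starProjection 𝟙[hA] = ν.real A • Lp.const 2 ν 1 := by
    intro A hA hAC
    refine Lp.eq_of_inner_indicatorConstLp_eq_of_isPiSystem hgen hC (fun B hB hBC => ?_) ?_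
    · rw [real_inner_comm, tendsto_nhds_unique (hR.tendsto_cesaroMean_measureReal_preimage_inter
        hA hB) (hcorr A hAC B hBC), real_inner_smul_right,
        inner_indicatorConstLp_one_const_one, mul_comm]
    · rw [← K.inner_starProjection_left_eq_right, hK1, real_inner_smul_right,
        inner_const_one_const_one, inner_const_one_eq_integral, integral_indicatorConstLp,
        smul_eq_mul, mul_one]
  refine ⟨hR, ⟨fun E hE hRE => ?_⟩⟩
  have hfix : K.starProjection 𝟙[hE] = 𝟙[hE] := by
    refine K.starProjection_eq_self_iff.2 ?_
    change koopman hR 𝟙[hE] = 𝟙[hE]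
    rw [koopman_apply, Lp.indicatorConstLp_compMeasurePreserving]
    congr
  have hconst : 𝟙[hE] = ν.real E • Lp.const 2 ν 1 := by
    refine Lp.eq_of_inner_indicatorConstLp_eq_of_isPiSystem hgen hC (fun B hB hBC => ?_) ?_
    · rw [← hfix, ← K.inner_starProjection_left_eq_right, hproj B hB hBC, real_inner_smul_left,
        real_inner_smul_right, real_inner_comm, inner_indicatorConstLp_one_const_one,
        inner_indicatorConstLp_one_const_one, mul_comm]
    · rw [real_inner_smul_right, inner_const_one_const_one, inner_const_one_eq_integral,
        integral_indicatorConstLp, smul_eq_mul, mul_one]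
  have hae : E.indicator (fun _ => (1 : ℝ)) =ᵐ[ν] fun _ => ν.real E := by
    filter_upwards [indicatorConstLp_coeFn (p := 2) (hs := hE) (hμs := measure_ne_top ν E)
      (c := (1 : ℝ)), Lp.coeFn_smul (ν.real E) (Lp.const 2 ν (1 : ℝ))] with x h1 h2
    rw [← h1, hconst, h2]
    simp
  exact ((EventuallyConst.const _).congr hae.symm).of_indicator_const one_ne_zero

end Koopman

theorem measureReal_prodMap_iterate_preimage_prod_inter_prod {X Y : Type*} [MeasurableSpace X]
    [MeasurableSpace Y] {μ : Measure X} {ν : Measure Y} [SFinite ν] (f : X → X) (g : Y → Y)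
    (n : ℕ) (A C : Set X) (B D : Set Y) :
    (μ.prod ν).real ((Prod.map f g)^[n] ⁻¹' (A ×ˢ B) ∩ C ×ˢ D) =
      μ.real (f^[n] ⁻¹' A ∩ C) * ν.real (g^[n] ⁻¹' B ∩ D) := by
  rw [Prod.map_iterate, Set.preimage_prod_map_prod, Set.prod_inter_prod, measureReal_prod_prod]

section WeakMixing

variable {X : Type*} [MeasurableSpace X] {μ : Measure X} [IsProbabilityMeasure μ] {T : X → X}

theorem Ergodic.of_prodMap_self (hT : Ergodic (Prod.map T T) (μ.prod μ)) (hTm : Measurable T) :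
    Ergodic T μ :=
  measurePreserving_fst.ergodic_of_ergodic_semiconj hT hTm fun _ => rfl

theorem Ergodic.tendsto_cesaroMean_sq_sub_of_prodMap_self
    (hT : Ergodic (Prod.map T T) (μ.prod μ)) (hTm : Measurable T) {A B : Set X}
    (hA : MeasurableSet A) (hB : MeasurableSet B) :
    Tendsto (fun N => cesaroMean N fun n => (μ.real (T^[n] ⁻¹' A ∩ B) - μ.real A * μ.real B) ^ 2)
      atTop (𝓝 0) := by
  refine tendsto_cesaroMean_sq_sub
    ((hT.of_prodMap_self hTm).tendsto_cesaroMean_measureReal_preimage_inter hA hB) ?_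
  have h := hT.tendsto_cesaroMean_measureReal_preimage_inter (hA.prod hA) (hB.prod hB)
  simpa only [measureReal_prodMap_iterate_preimage_prod_inter_prod, measureReal_prod_prod, ← sq,
    ← mul_pow] using h

end WeakMixing

theorem weakMixing_T_times_Tsq_ergodic_general
    {X : Type*} [MeasurableSpace X] (μ : Measure X) [IsProbabilityMeasure μ]
    (T : X ≃ᵐ X)
    (hTwm : Ergodic (fun p : X × X => (T p.1, T p.2)) (μ.prod μ)) :
    Ergodic (fun p : X × X => (T p.1, (⇑T)^[2] p.2)) (μ.prod μ) := by
  have hT : Ergodic T μ := hTwm.of_prodMap_self T.measurable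
  have hS : MeasurePreserving (Prod.map T (T^[2])) (μ.prod μ) (μ.prod μ) :=
    hT.toMeasurePreserving.prod (hT.toMeasurePreserving.iterate 2)
  refine hS.ergodic_of_tendsto_cesaroMean generateFrom_prod.symm isPiSystem_prod ?_
  rintro _ ⟨A, hA, B, hB, rfl⟩ _ ⟨C, hC, D, hD, rfl⟩
  simp only [measureReal_prodMap_iterate_preimage_prod_inter_prod, ← Function.iterate_mul,
    measureReal_prod_prod]
  have hAC := hTwm.tendsto_cesaroMean_sq_sub_of_prodMap_self T.measurable hA hC
  have hBD := tendsto_cesaroMean_comp_two_mul (fun _ => sq_nonneg _)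
    (hTwm.tendsto_cesaroMean_sq_sub_of_prodMap_self T.measurable hB hD)
  convert tendsto_cesaroMean_mul hAC hBD fun n => ?_ using 2
  · ring
  · rw [abs_of_nonneg measureReal_nonneg]
    exact measureReal_le_one

/-- If `T` is a weakly mixing invertible measure-preserving transformation of a
probability space `(X, μ)`, then `T × T²` is ergodic on `(X × X, μ ⊗ μ)`. -/
theorem weakMixing_T_times_Tsq_ergodic
    {X : Type*} [MeasurableSpace X] (μ : Measure X) [IsProbabilityMeasure μ]
    (T : X ≃ᵐ X) (hT : MeasurePreserving T μ μ)
    (hTwm : Ergodic (fun p : X × X => (T p.1, T p.2)) (μ.prod μ)) :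
    Ergodic (fun p : X × X => (T p.1, (⇑T)^[2] p.2)) (μ.prod μ) :=
  weakMixing_T_times_Tsq_ergodic_general μ T hTwm
end

section
/- Let H be a Hilbert space, U : H → H a linear isometry, and f ∈ H such that the closure of the orbit {U^i f : i ∈ ℕ} is compact in H. Then for every ε > 0 there exists a natural number L ≥ 1 such that for every n ∈ ℕ there is some i with n + 1 ≤ i ≤ n + L and ‖U^i f − f‖ < ε. -/
/-!
The orbit `gᵢ = Uⁱ f` is totally bounded, so finitely many orbit points `g_a` with `a ≤ M`
form an `ε`-net of it. Given `n`, the point `g_{n+M+1}` is `ε`-close to some such `g_a`, and since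
`U^a` is an isometry, `‖g_{n+M+1-a} - f‖ = ‖g_{n+M+1} - g_a‖ < ε`, with `n+1 ≤ n+M+1-a ≤ n+M+1`.
-/

open Set Metric

theorem Isometry.iterate {α : Type*} [PseudoEMetricSpace α] {T : α → α} (hT : Isometry T) :
    ∀ n : ℕ, Isometry T^[n]
  | 0 => isometry_id
  | n + 1 => (hT.iterate n).comp hT

theorem Isometry.dist_iterate_add_iterate {α : Type*} [PseudoMetricSpace α] {T : α → α}
    (hT : Isometry T) (x : α) (a i : ℕ) :
    dist (T^[a + i] x) (T^[a] x) = dist (T^[i] x) x := by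
  rw [Function.iterate_add_apply]
  exact (hT.iterate a).dist_eq _ _

theorem Set.Finite.exists_subset_image_Iic_of_subset_range {ι α : Type*} [Preorder ι]
    [IsDirectedOrder ι] [Nonempty ι] {g : ι → α} {t : Set α} (ht : t.Finite)
    (hsub : t ⊆ range g) : ∃ M, t ⊆ g '' Iic M := by
  choose! idx hidx using show ∀ y ∈ t, ∃ i, g i = y from hsub
  obtain ⟨M, hM⟩ := (ht.image idx).bddAbove
  exact ⟨M, fun y hy => ⟨idx y, hM (mem_image_of_mem idx hy), hidx y hy⟩⟩

theorem TotallyBounded.exists_forall_exists_le_dist_lt {ι α : Type*} [Preorder ι]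
    [IsDirectedOrder ι] [Nonempty ι] [PseudoMetricSpace α] {g : ι → α}
    (hg : TotallyBounded (range g)) {ε : ℝ} (hε : 0 < ε) :
    ∃ M, ∀ m, ∃ a ≤ M, dist (g m) (g a) < ε := by
  obtain ⟨t, hts, htf, hcover⟩ := finite_approx_of_totallyBounded hg ε hε
  obtain ⟨M, hM⟩ := htf.exists_subset_image_Iic_of_subset_range hts
  refine ⟨M, fun m => ?_⟩
  obtain ⟨y, hyt, hmy⟩ := mem_iUnion₂.mp (hcover (mem_range_self m))
  obtain ⟨a, haM, rfl⟩ := hM hyt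
  exact ⟨a, haM, hmy⟩

theorem Isometry.exists_syndetic_return {α : Type*} [PseudoMetricSpace α] {T : α → α}
    (hT : Isometry T) (x : α) (horbit : TotallyBounded (range fun i : ℕ => T^[i] x))
    {ε : ℝ} (hε : 0 < ε) :
    ∃ L : ℕ, 1 ≤ L ∧ ∀ n : ℕ, ∃ i : ℕ, n + 1 ≤ i ∧ i ≤ n + L ∧ dist (T^[i] x) x < ε := by
  obtain ⟨M, hM⟩ := horbit.exists_forall_exists_le_dist_lt hε
  refine ⟨M + 1, Nat.le_add_left 1 M, fun n => ?_⟩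
  obtain ⟨a, haM, hclose⟩ := hM (n + (M + 1))
  refine ⟨n + (M + 1) - a, by omega, by omega, ?_⟩
  rwa [← hT.dist_iterate_add_iterate x a, Nat.add_sub_cancel' (by omega)]

theorem almostPeriodic_syndetic_return_general
    {𝕜 H : Type*} [RCLike 𝕜] [NormedAddCommGroup H] [InnerProductSpace 𝕜 H]
    (U : H →ₗᵢ[𝕜] H) (f : H)
    (hcpt : IsCompact (closure (Set.range fun i : ℕ => (⇑U)^[i] f))) :
    ∀ ε > 0, ∃ L : ℕ, 1 ≤ L ∧ ∀ n : ℕ, ∃ i : ℕ,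
      n + 1 ≤ i ∧ i ≤ n + L ∧ ‖(⇑U)^[i] f - f‖ < ε := by
  intro ε hε
  simpa only [dist_eq_norm] using U.isometry.exists_syndetic_return f
    (hcpt.totallyBounded.subset subset_closure) hε

/-- If `U` is a linear isometry of a Hilbert space `H` and the orbit closure
`cl {Uⁱ f : i ∈ ℕ}` is compact, then the times `i` with `‖Uⁱ f - f‖ < ε`
are syndetic: for every `ε > 0` there is `L ≥ 1` such that every window
`{n+1, …, n+L}` contains such an `i`. -/
theorem almostPeriodic_syndetic_return
    {𝕜 H : Type*} [RCLike 𝕜] [NormedAddCommGroup H] [InnerProductSpace 𝕜 H]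
    [CompleteSpace H] (U : H →ₗᵢ[𝕜] H) (f : H)
    (hcpt : IsCompact (closure (Set.range fun i : ℕ => (⇑U)^[i] f))) :
    ∀ ε > 0, ∃ L : ℕ, 1 ≤ L ∧ ∀ n : ℕ, ∃ i : ℕ,
      n + 1 ≤ i ∧ i ≤ n + L ∧ ‖(⇑U)^[i] f - f‖ < ε :=
  almostPeriodic_syndetic_return_general U f hcpt
end
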